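/- arXiv:1307.5725 — 4 statements merged into one kernel-verified Lean document; each statement's English description precedes it below -/
import Mathlib

section
/- Let A ∈ ℝ^{m×N} have the (k, γ_k)-NSP with γ_k < 1. Let x, x* ∈ ℝ^N with Ax* = Ax and ‖x*‖₁ ≤ ‖x‖₁, and let Λ be the support of the best k-term approximation of x. Then ‖(x − x*)|_{Λᶜ}‖₁ ≤ (2/(1−γ_k)) σ_k(x)₁. -/
open Finset

/-- ℓ¹ norm of a vector. -/
noncomputable def l1 {N : ℕ} (x : Fin N → ℝ) : ℝ := ∑ i, |x i|

/-- ℓ² norm of a vector. -/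
noncomputable def l2 {n : ℕ} (x : Fin n → ℝ) : ℝ := Real.sqrt (∑ i, (x i) ^ 2)

/-- Restriction of a vector to an index set (zero off the set). -/
noncomputable def restr {N : ℕ} (Λ : Finset (Fin N)) (x : Fin N → ℝ) : Fin N → ℝ :=
  fun i => if i ∈ Λ then x i else 0

/-- Support of a vector as a finset. -/
noncomputable def supp {N : ℕ} (z : Fin N → ℝ) : Finset (Fin N) :=
  univ.filter (fun i => z i ≠ 0)

/-- Null Space Property of order `k` with constant `γ`. -/
def NSP {m N : ℕ} (A : Matrix (Fin m) (Fin N) ℝ) (k : ℕ) (γ : ℝ) : Prop :=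
  ∀ z : Fin N → ℝ, A.mulVec z = 0 → ∀ Λ : Finset (Fin N), Λ.card ≤ k →
    l1 (restr Λ z) ≤ γ * l1 (restr Λᶜ z)

/-- Restricted Isometry Property of order `K` with constant `δ` (norm version). -/
noncomputable def RIP {m N : ℕ} (A : Matrix (Fin m) (Fin N) ℝ) (K : ℕ) (δ : ℝ) : Prop :=
  ∀ z : Fin N → ℝ, (supp z).card ≤ K →
    (1 - δ) * l2 z ≤ l2 (A.mulVec z) ∧ l2 (A.mulVec z) ≤ (1 + δ) * l2 z

/-- ℓ¹ best `k`-term approximation error. -/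
noncomputable def sigma1 {N : ℕ} (k : ℕ) (x : Fin N → ℝ) : ℝ :=
  sInf {t : ℝ | ∃ z : Fin N → ℝ, (supp z).card ≤ k ∧ t = l1 (x - z)}

/-- Index set of entries exceeding `r` in absolute value. -/
noncomputable def Sr {N : ℕ} (r : ℝ) (x : Fin N → ℝ) : Finset (Fin N) :=
  univ.filter (fun i => r < |x i|)

/-- The Hölder constant κ_p(N,k). -/
noncomputable def kappa (p : ℝ) (N k : ℕ) : ℝ :=
  if p = 1 then 1 else ((N - k : ℕ) : ℝ) ^ (1 - 1 / p)

/-- Membership in the class 𝒮^p_{η,k,r} of sparse vectors affected by bounded noise. -/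
noncomputable def inClass {N : ℕ} (p η : ℝ) (k : ℕ) (r : ℝ) (x : Fin N → ℝ) : Prop :=
  (Sr r x).card ≤ k ∧ ∑ i ∈ (Sr r x)ᶜ, |x i| ^ p ≤ η ^ p

/-- Entrywise hard thresholding with threshold `t`. -/
noncomputable def hardThr {N : ℕ} (t : ℝ) (z : Fin N → ℝ) : Fin N → ℝ :=
  fun i => if t < |z i| then z i else 0

/-!
With `z = x - x*` in `ker A`, the triangle inequality on `Λ` and on `Λᶜ` together with
`‖x*‖₁ ≤ ‖x‖₁` gives `‖z|_{Λᶜ}‖₁ ≤ ‖z|_Λ‖₁ + 2 ‖x|_{Λᶜ}‖₁`, and the null space property bounds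
`‖z|_Λ‖₁` by `γ ‖z|_{Λᶜ}‖₁`.
-/

lemma restr_sub {N : ℕ} (Λ : Finset (Fin N)) (v w : Fin N → ℝ) :
    restr Λ (v - w) = restr Λ v - restr Λ w := by
  ext i
  by_cases hi : i ∈ Λ <;> simp [restr, hi]

lemma l1_eq_l1_restr_add_l1_restr_compl {N : ℕ} (Λ : Finset (Fin N)) (v : Fin N → ℝ) :
    l1 v = l1 (restr Λ v) + l1 (restr Λᶜ v) := by
  unfold l1
  rw [← sum_add_distrib]
  refine sum_congr rfl fun i _ => ?_
  by_cases hi : i ∈ Λ <;> simp [restr, hi]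

lemma l1_sub_le {N : ℕ} (v w : Fin N → ℝ) : l1 (v - w) ≤ l1 v + l1 w := by
  unfold l1
  rw [← sum_add_distrib]
  exact sum_le_sum fun i _ => abs_sub _ _

lemma l1_le_l1_sub_add {N : ℕ} (v w : Fin N → ℝ) : l1 v ≤ l1 (v - w) + l1 w := by
  unfold l1
  rw [← sum_add_distrib]
  exact sum_le_sum fun i _ => by
    simpa only [Pi.sub_apply, sub_le_iff_le_add] using abs_sub_abs_le_abs_sub (v i) (w i)

lemma l1_restr_compl_sub_le {N : ℕ} (Λ : Finset (Fin N)) (x xs : Fin N → ℝ) :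
    l1 (restr Λᶜ (x - xs)) ≤
      l1 xs - l1 x + l1 (restr Λ (x - xs)) + 2 * l1 (restr Λᶜ x) := by
  have hΛ := l1_le_l1_sub_add (restr Λ x) (restr Λ xs)
  have hΛc := l1_sub_le (restr Λᶜ x) (restr Λᶜ xs)
  rw [← restr_sub] at hΛ hΛc
  rw [l1_eq_l1_restr_add_l1_restr_compl Λ x, l1_eq_l1_restr_add_l1_restr_compl Λ xs]
  linarith

theorem stmt1_general {m N : ℕ} (A : Matrix (Fin m) (Fin N) ℝ) (k : ℕ) (γ : ℝ)
    (hNSP : NSP A k γ) (hγ : γ < 1) (x xs : Fin N → ℝ)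
    (hfeas : A.mulVec xs = A.mulVec x) (hl1 : l1 xs ≤ l1 x)
    (Λ : Finset (Fin N)) (hcard : Λ.card = k) :
    l1 (restr Λᶜ (x - xs)) ≤ (2 / (1 - γ)) * l1 (restr Λᶜ x) := by
  have hker : A.mulVec (x - xs) = 0 := by rw [Matrix.mulVec_sub, hfeas, sub_self]
  have hnsp := hNSP (x - xs) hker Λ hcard.le
  have hcone := l1_restr_compl_sub_le Λ x xs
  rw [div_mul_eq_mul_div, le_div_iff₀ (sub_pos.2 hγ)]
  linarith

theorem stmt1 {m N : ℕ} (A : Matrix (Fin m) (Fin N) ℝ) (k : ℕ) (γ : ℝ)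
    (hNSP : NSP A k γ) (hγ : γ < 1) (x xs : Fin N → ℝ)
    (hfeas : A.mulVec xs = A.mulVec x) (hl1 : l1 xs ≤ l1 x)
    (Λ : Finset (Fin N)) (hcard : Λ.card = k)
    (hbig : ∀ i ∈ Λ, ∀ j ∉ Λ, |x j| ≤ |x i|) :
    l1 (restr Λᶜ (x - xs)) ≤ (2 / (1 - γ)) * l1 (restr Λᶜ x) :=
  stmt1_general A k γ hNSP hγ x xs hfeas hl1 Λ hcard
end

section
/- Let A ∈ ℝ^{m×N} have the (2k, γ_{2k})-NSP with γ_{2k} < 1, fix 1 ≤ p ≤ 2, and let x, x' ∈ 𝒮^p_{η,k,r} with Ax = Ax'. If r > η (1 + 2 γ_{2k} κ_p), then S_r(x) = S_r(x'), i.e., the index sets of entries exceeding r in absolute value coincide. -/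
open Finset

/-
If `i ∈ S_r(x) \ S_r(x')`, put `z = x - x' ∈ ker A` and pad `S_r(x) ∪ S_r(x')` to a set `Λ` with
`#Λ ≤ 2k` and `#Λᶜ ≤ N - k`. Off `Λ` both vectors are small, so Hölder bounds `‖z|_{Λᶜ}‖₁` by
`2 κ_p η`, and the NSP gives `r - η < |x_i| - |x'_i| ≤ |z_i| ≤ ‖z|_Λ‖₁ ≤ 2 γ κ_p η`, contradicting the
choice of `r`. When `γ < 0` the NSP forces `ker A = 0`, so `x = x'`.
-/

lemma l1_restr {N : ℕ} (Λ : Finset (Fin N)) (z : Fin N → ℝ) :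
    l1 (restr Λ z) = ∑ i ∈ Λ, |z i| := by
  simp only [l1, restr, apply_ite abs, abs_zero, Finset.sum_ite_mem, Finset.univ_inter]

lemma mem_Sr {N : ℕ} {r : ℝ} {x : Fin N → ℝ} {i : Fin N} : i ∈ Sr r x ↔ r < |x i| := by
  simp [Sr]

lemma kappa_eq_rpow (p : ℝ) (N k : ℕ) : kappa p N k = ((N - k : ℕ) : ℝ) ^ (1 - 1 / p) := by
  unfold kappa
  split_ifs with hp
  · simp [hp]
  · rfl

lemma NSP.eq_zero_of_neg {m N : ℕ} {A : Matrix (Fin m) (Fin N) ℝ} {k : ℕ} {γ : ℝ}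
    (hA : NSP A k γ) (hγ : γ < 0) {z : Fin N → ℝ} (hz : A.mulVec z = 0) : z = 0 := by
  have h := hA z hz ∅ (Nat.zero_le _)
  rw [l1_restr, l1_restr, Finset.sum_empty, Finset.compl_empty] at h
  have hsum : ∑ i, |z i| = 0 :=
    le_antisymm (nonpos_of_mul_nonneg_right h hγ) (Finset.sum_nonneg fun i _ => abs_nonneg _)
  funext i
  simpa using (Finset.sum_eq_zero_iff_of_nonneg fun j _ => abs_nonneg (z j)).1 hsum i
    (Finset.mem_univ i)

lemma sum_abs_le_rpow_mul_of_sum_rpow_le {ι : Type*} {T : Finset ι} {n : ℕ} {x : ι → ℝ}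
    {p η : ℝ} (hp : 1 ≤ p) (hη : 0 ≤ η) (hT : T.card ≤ n) (hx : ∑ i ∈ T, |x i| ^ p ≤ η ^ p) :
    ∑ i ∈ T, |x i| ≤ (n : ℝ) ^ (1 - 1 / p) * η := by
  have hp0 : 0 < p := by linarith
  have hn : ((n : ℝ) ^ (1 - 1 / p)) ^ p = (n : ℝ) ^ (p - 1) := by
    rw [← Real.rpow_mul (Nat.cast_nonneg n)]
    congr 1
    field_simp
  rw [← Real.rpow_le_rpow_iff (Finset.sum_nonneg fun i _ => abs_nonneg _) (by positivity) hp0]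
  calc (∑ i ∈ T, |x i|) ^ p ≤ (T.card : ℝ) ^ (p - 1) * ∑ i ∈ T, |x i| ^ p :=
        Real.rpow_sum_le_const_mul_sum_rpow T x hp
    _ ≤ (n : ℝ) ^ (p - 1) * η ^ p := by gcongr
    _ = ((n : ℝ) ^ (1 - 1 / p) * η) ^ p := by
        rw [Real.mul_rpow (by positivity) hη, hn]

namespace inClass

variable {N k : ℕ} {p η r : ℝ} {x : Fin N → ℝ}

lemma abs_le_of_not_mem_Sr (hx : inClass p η k r x) (hp : 0 < p) (hη : 0 ≤ η) {i : Fin N}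
    (hi : i ∉ Sr r x) : |x i| ≤ η := by
  have h : |x i| ^ p ≤ η ^ p :=
    (Finset.single_le_sum (fun j _ => Real.rpow_nonneg (abs_nonneg (x j)) p)
      (Finset.mem_compl.2 hi)).trans hx.2
  exact (Real.rpow_le_rpow_iff (abs_nonneg _) hη hp).1 h

lemma sum_abs_le_kappa_mul (hx : inClass p η k r x) (hp : 1 ≤ p) (hη : 0 ≤ η)
    {T : Finset (Fin N)} (hTx : T ⊆ (Sr r x)ᶜ) (hT : T.card ≤ N - k) :
    ∑ i ∈ T, |x i| ≤ kappa p N k * η := by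
  rw [kappa_eq_rpow]
  refine sum_abs_le_rpow_mul_of_sum_rpow_le hp hη hT ?_
  exact (Finset.sum_le_sum_of_subset_of_nonneg hTx fun j _ _ => by positivity).trans hx.2

end inClass

lemma exists_superset_card_le_two_mul {N k : ℕ} {s : Finset (Fin N)} (hs : s.card ≤ 2 * k) :
    ∃ Λ, s ⊆ Λ ∧ Λ.card ≤ 2 * k ∧ Λᶜ.card ≤ N - k := by
  obtain ⟨Λ, hsΛ, -, hΛ⟩ := Finset.exists_subsuperset_card_eq (Finset.subset_univ s)
    (le_min hs (by simpa using s.card_le_univ)) (by simp)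
  refine ⟨Λ, hsΛ, by omega, ?_⟩
  rw [Finset.card_compl, Fintype.card_fin]
  omega

lemma Sr_subset_of_mulVec_eq {m N : ℕ} {A : Matrix (Fin m) (Fin N) ℝ} {k : ℕ} {γ p η r : ℝ}
    (hA : NSP A (2 * k) γ) (hγ : 0 ≤ γ) (hp : 1 ≤ p) (hη : 0 ≤ η) {x x' : Fin N → ℝ}
    (hx : inClass p η k r x) (hx' : inClass p η k r x') (hxx' : A.mulVec x = A.mulVec x')
    (hr : η * (1 + 2 * γ * kappa p N k) < r) :
    Sr r x ⊆ Sr r x' := by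
  intro i hi
  by_contra hi'
  have hcard : (Sr r x ∪ Sr r x').card ≤ 2 * k := by
    have := Finset.card_union_le (Sr r x) (Sr r x')
    have := hx.1
    have := hx'.1
    omega
  obtain ⟨Λ, hΛ, hΛcard, hΛcompl⟩ := exists_superset_card_le_two_mul hcard
  set z := x - x'
  have hz : A.mulVec z = 0 := by rw [Matrix.mulVec_sub, hxx', sub_self]
  have hΛx : Λᶜ ⊆ (Sr r x)ᶜ := Finset.compl_subset_compl.2 (Finset.subset_union_left.trans hΛ)
  have hΛx' : Λᶜ ⊆ (Sr r x')ᶜ := Finset.compl_subset_compl.2 (Finset.subset_union_right.trans hΛ)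
  have hzi : |z i| ≤ γ * (kappa p N k * η + kappa p N k * η) :=
    calc |z i| ≤ ∑ j ∈ Λ, |z j| :=
          Finset.single_le_sum (fun j _ => abs_nonneg (z j)) (hΛ (Finset.mem_union_left _ hi))
      _ ≤ γ * ∑ j ∈ Λᶜ, |z j| := by simpa only [l1_restr] using hA z hz Λ hΛcard
      _ ≤ γ * (∑ j ∈ Λᶜ, |x j| + ∑ j ∈ Λᶜ, |x' j|) := by
          rw [← Finset.sum_add_distrib]
          gcongr with j
          exact abs_sub _ _
      _ ≤ γ * (kappa p N k * η + kappa p N k * η) := by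
          gcongr
          · exact hx.sum_abs_le_kappa_mul hp hη hΛx hΛcompl
          · exact hx'.sum_abs_le_kappa_mul hp hη hΛx' hΛcompl
  have hxi : |x i| ≤ |x' i| + |z i| := by
    simpa [z] using abs_add_le (x' i) (x i - x' i)
  have hx'i : |x' i| ≤ η := hx'.abs_le_of_not_mem_Sr (by linarith) hη hi'
  have hri : r < |x i| := mem_Sr.1 hi
  linarith

theorem stmt5_general {m N : ℕ} (A : Matrix (Fin m) (Fin N) ℝ) (k : ℕ) (γ p η r : ℝ)
    (hNSP : NSP A (2 * k) γ) (hp : 1 ≤ p)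
    (hη : 0 ≤ η)
    (x x' : Fin N → ℝ) (hx : inClass p η k r x) (hx' : inClass p η k r x')
    (hfeas : A.mulVec x = A.mulVec x')
    (hr : η * (1 + 2 * γ * kappa p N k) < r) :
    Sr r x = Sr r x' := by
  rcases lt_or_ge γ 0 with hγ | hγ
  · have hz : A.mulVec (x - x') = 0 := by rw [Matrix.mulVec_sub, hfeas, sub_self]
    rw [sub_eq_zero.1 (hNSP.eq_zero_of_neg hγ hz)]
  · exact (Sr_subset_of_mulVec_eq hNSP hγ hp hη hx hx' hfeas hr).antisymm
      (Sr_subset_of_mulVec_eq hNSP hγ hp hη hx' hx hfeas.symm hr)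

theorem stmt5 {m N : ℕ} (A : Matrix (Fin m) (Fin N) ℝ) (k : ℕ) (γ p η r : ℝ)
    (hNSP : NSP A (2 * k) γ) (hγ : γ < 1) (hp : 1 ≤ p) (hp2 : p ≤ 2)
    (hη : 0 ≤ η)
    (x x' : Fin N → ℝ) (hx : inClass p η k r x) (hx' : inClass p η k r x')
    (hfeas : A.mulVec x = A.mulVec x')
    (hr : η * (1 + 2 * γ * kappa p N k) < r) :
    Sr r x = Sr r x' :=
  stmt5_general A k γ p η r hNSP hp hη x x' hx hx' hfeas hr
end

section
/- In the setting of the selective p-potential theorem: if 𝒮𝒫(x*) ≤ 𝒮𝒫(x), x ∈ 𝒮^p_{η,k,r+ε} with η < r, and x has minimal #S_{r+ε} among feasible vectors, then #S_{r+ε}(x*) ≤ (η/r)^p + #S_{r+ε}(x), and hence, since (η/r)^p < 1 and cardinalities are integers and x is support-minimal, #S_{r+ε}(x*) = #S_{r+ε}(x). -/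
open Finset

/-!
The selective potential of `xs` is at least `r ^ p * #S(xs)`, while that of `x` is at most
`r ^ p * #S(x) + η ^ p`, because the entries of `x` outside `S(x)` have `p`-th power sum at most
`η ^ p`. Dividing by `r ^ p` gives the first bound; as `(η / r) ^ p < 1` and cardinalities are
integers, it forces `#S(xs) ≤ #S(x)`, and minimality of `x` gives the reverse inequality.
-/

section SelectivePotential

variable {N k : ℕ} {p η ρ r : ℝ} {w : ℝ → ℝ}

lemma sum_compl_Sr_le_of_inClass (hw : ∀ t, w t ≤ |t| ^ p) {x : Fin N → ℝ}
    (hx : inClass p η k ρ x) : ∑ i ∈ (Sr ρ x)ᶜ, w (x i) ≤ η ^ p :=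
  (sum_le_sum fun i _ => hw (x i)).trans hx.2

lemma card_Sr_le_rpow_div_add_of_potential_le (hr : 0 < r) (hη : 0 ≤ η)
    (hw0 : ∀ t, 0 ≤ w t) (hw1 : ∀ t, w t ≤ |t| ^ p) {x y : Fin N → ℝ}
    (hx : inClass p η k ρ x)
    (hle : r ^ p * (#(Sr ρ y) : ℝ) + ∑ i ∈ (Sr ρ y)ᶜ, w (y i) ≤
      r ^ p * (#(Sr ρ x) : ℝ) + ∑ i ∈ (Sr ρ x)ᶜ, w (x i)) :
    (#(Sr ρ y) : ℝ) ≤ (η / r) ^ p + #(Sr ρ x) := by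
  have hrp : 0 < r ^ p := Real.rpow_pos_of_pos hr p
  have hy : 0 ≤ ∑ i ∈ (Sr ρ y)ᶜ, w (y i) := sum_nonneg fun i _ => hw0 (y i)
  have hx' := sum_compl_Sr_le_of_inClass hw1 hx
  rw [Real.div_rpow hη hr.le, div_add' _ _ _ hrp.ne', le_div_iff₀ hrp]
  linarith

end SelectivePotential

lemma Nat.le_of_cast_le_add_of_lt_one {a b : ℕ} {δ : ℝ} (h : (a : ℝ) ≤ δ + b) (hδ : δ < 1) :
    a ≤ b := by
  have : (a : ℝ) < b + 1 := by linarith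
  exact_mod_cast Nat.lt_succ_iff.mp (by exact_mod_cast this)

theorem stmt11_general {m N : ℕ} (A : Matrix (Fin m) (Fin N) ℝ) (k : ℕ)
    (p ε η r : ℝ) (hp : 1 ≤ p)
    (hη0 : 0 ≤ η) (hη : η < r)
    (w : ℝ → ℝ) (hw0 : ∀ t, 0 ≤ w t) (hw1 : ∀ t, w t ≤ |t| ^ p)
    (SP : (Fin N → ℝ) → ℝ)
    (hSP : ∀ z : Fin N → ℝ,
      SP z = r ^ p * ((Sr (r + ε) z).card : ℝ) + ∑ i ∈ (Sr (r + ε) z)ᶜ, w (z i))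
    (x xs : Fin N → ℝ) (hx : inClass p η k (r + ε) x)
    (hminsupp : ∀ z : Fin N → ℝ, A.mulVec z = A.mulVec x →
      (Sr (r + ε) x).card ≤ (Sr (r + ε) z).card)
    (hfeas : A.mulVec xs = A.mulVec x)
    (hSPle : SP xs ≤ SP x) :
    ((Sr (r + ε) xs).card : ℝ) ≤ (η / r) ^ p + ((Sr (r + ε) x).card : ℝ) ∧
    (Sr (r + ε) xs).card = (Sr (r + ε) x).card := by
  have hr : 0 < r := hη0.trans_lt hη
  have hcard := card_Sr_le_rpow_div_add_of_potential_le hr hη0 hw0 hw1 hx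
    (by simpa only [hSP] using hSPle)
  have hratio : (η / r) ^ p < 1 :=
    Real.rpow_lt_one (div_nonneg hη0 hr.le) ((div_lt_one hr).2 hη) (by linarith)
  exact ⟨hcard, le_antisymm (Nat.le_of_cast_le_add_of_lt_one hcard hratio) (hminsupp xs hfeas)⟩

theorem stmt11 {m N : ℕ} (A : Matrix (Fin m) (Fin N) ℝ) (k : ℕ)
    (p ε η r : ℝ) (hp : 1 ≤ p) (hp2 : p ≤ 2)
    (hε : 0 < ε) (hη0 : 0 ≤ η) (hη : η < r)
    (w : ℝ → ℝ) (hw0 : ∀ t, 0 ≤ w t) (hw1 : ∀ t, w t ≤ |t| ^ p)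
    (SP : (Fin N → ℝ) → ℝ)
    (hSP : ∀ z : Fin N → ℝ,
      SP z = r ^ p * ((Sr (r + ε) z).card : ℝ) + ∑ i ∈ (Sr (r + ε) z)ᶜ, w (z i))
    (x xs : Fin N → ℝ) (hx : inClass p η k (r + ε) x)
    (hminsupp : ∀ z : Fin N → ℝ, A.mulVec z = A.mulVec x →
      (Sr (r + ε) x).card ≤ (Sr (r + ε) z).card)
    (hfeas : A.mulVec xs = A.mulVec x)
    (hSPle : SP xs ≤ SP x) :
    ((Sr (r + ε) xs).card : ℝ) ≤ (η / r) ^ p + ((Sr (r + ε) x).card : ℝ) ∧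
    (Sr (r + ε) xs).card = (Sr (r + ε) x).card :=
  stmt11_general A k p ε η r hp hη0 hη w hw0 hw1 SP hSP x xs hx hminsupp hfeas hSPle
end

section
/- Let A ∈ ℝ^{m×N} with operator norm ‖A‖ ≤ 1 and (2k, δ_{2k})-RIP, δ_{2k} < 1, and β(A) > 0 such that sup_i |A_iᵀ z| ≥ β(A)‖z‖₂ for all z ∈ ℝ^m, where A_i are the columns of A. Let x ∈ 𝒮^p_{η,k,r}, y = Ax, and suppose r > η(1 + (1/(1−δ_{2k}))(1 + 1/β(A))) and η < √τ < (r − η/(1−δ_{2k}))/(1 + 1/((1−δ_{2k})β(A))). Let x^IHT be a fixed point of the iterative hard thresholding map z ↦ H_{√τ}(z + Aᵀ(y − Az)) satisfying 𝒥₀(x^IHT) ≤ 𝒥₀(x|_{S_r(x)}), where 𝒥₀(z) = ‖Az − y‖₂² + τ·#supp(z). Assume additionally the fixed-point residual bound ‖A x^IHT − y‖₂ ≤ √τ/β(A). Then supp(x^IHT) = S_r(x) and |x_i − x^IHT_i| < r − √τ for all i ∈ S_r(x). -/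
open Finset

/-!
The `ℓ⁰` penalty in `𝒥₀` forces `#supp xᴵᴴᵀ ≤ #S_r(x)`, because the competitor `x|_{S_r(x)}`
has residual `‖A x|_{S_r(x)ᶜ}‖₂ ≤ η < √τ`. Hence `x - xᴵᴴᵀ` is, on the at most `2k` indices of
`S_r(x) ∪ supp xᴵᴴᵀ`, controlled via RIP by the residual `√τ / β` and the tail `η`; the upper bound
on `√τ` puts this below `r - √τ`. So no index of `S_r(x)` is zeroed by `xᴵᴴᵀ`, and the cardinality
bound turns `S_r(x) ⊆ supp xᴵᴴᵀ` into equality.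
-/

open scoped Matrix

section FinVectors

variable {n : ℕ}

lemma l2_nonneg (x : Fin n → ℝ) : 0 ≤ l2 x := Real.sqrt_nonneg _

lemma l2_eq_norm (x : Fin n → ℝ) : l2 x = ‖WithLp.toLp 2 x‖ := by
  simp [l2, EuclideanSpace.norm_eq, sq_abs]

lemma l2_neg (x : Fin n → ℝ) : l2 (-x) = l2 x := by
  simp [l2]

lemma l2_sub_le (x y : Fin n → ℝ) : l2 (x - y) ≤ l2 x + l2 y := by
  rw [l2_eq_norm, l2_eq_norm, l2_eq_norm, WithLp.toLp_sub]
  exact norm_sub_le _ _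

lemma abs_le_l2 (x : Fin n → ℝ) (i : Fin n) : |x i| ≤ l2 x := by
  rw [← Real.sqrt_sq_eq_abs]
  exact Real.sqrt_le_sqrt (single_le_sum (fun j _ => sq_nonneg (x j)) (mem_univ i))

lemma l2_restr_le (Λ : Finset (Fin n)) (x : Fin n → ℝ) : l2 (restr Λ x) ≤ l2 x :=
  Real.sqrt_le_sqrt <| sum_le_sum fun i _ => by
    by_cases hi : i ∈ Λ <;> simp [restr, hi, sq_nonneg]

lemma supp_restr_subset (Λ : Finset (Fin n)) (x : Fin n → ℝ) : supp (restr Λ x) ⊆ Λ := by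
  intro i hi
  by_contra h
  simp [supp, restr, h] at hi

lemma sum_sq_restr (Λ : Finset (Fin n)) (x : Fin n → ℝ) :
    ∑ i, restr Λ x i ^ 2 = ∑ i ∈ Λ, x i ^ 2 := by
  simp [restr]

lemma restr_eq_sub_restr_compl (Λ : Finset (Fin n)) (z : Fin n → ℝ) :
    restr Λ z = z - restr Λᶜ z := by
  funext i
  by_cases hi : i ∈ Λ <;> simp [restr, hi]

lemma restr_compl_sub_eq {S U : Finset (Fin n)} {y : Fin n → ℝ} (hS : S ⊆ U)
    (hy : supp y ⊆ U) (x : Fin n → ℝ) : restr Uᶜ (x - y) = restr Uᶜ (restr Sᶜ x) := by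
  funext i
  by_cases hi : i ∈ U
  · simp [restr, hi]
  · have hyi : y i = 0 := by
      by_contra h
      exact hi (hy (by simp [supp, h]))
    have hSi : i ∉ S := fun h => hi (hS h)
    simp [restr, hi, hyi, hSi]

end FinVectors

lemma sum_sq_le_of_sum_abs_rpow_le {ι : Type*} {s : Finset ι} {x : ι → ℝ} {p η : ℝ}
    (hp : 0 < p) (hp2 : p ≤ 2) (hη : 0 ≤ η) (hx : ∑ i ∈ s, |x i| ^ p ≤ η ^ p) :
    ∑ i ∈ s, x i ^ 2 ≤ η ^ 2 := by
  have habs : ∀ i ∈ s, |x i| ≤ η := fun i hi =>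
    (Real.rpow_le_rpow_iff (abs_nonneg _) hη hp).mp <|
      (single_le_sum (fun j _ => Real.rpow_nonneg (abs_nonneg (x j)) p) hi).trans hx
  have hsq : ∀ i ∈ s, x i ^ 2 ≤ η ^ (2 - p) * |x i| ^ p := fun i hi => by
    calc x i ^ 2 = |x i| ^ (2 - p) * |x i| ^ p := by
          rw [← Real.rpow_add' (abs_nonneg _) (by norm_num), sub_add_cancel, Real.rpow_two, sq_abs]
      _ ≤ η ^ (2 - p) * |x i| ^ p := by
          gcongr
          exact habs i hi
  calc ∑ i ∈ s, x i ^ 2 ≤ η ^ (2 - p) * ∑ i ∈ s, |x i| ^ p := by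
        rw [mul_sum]; exact sum_le_sum hsq
    _ ≤ η ^ (2 - p) * η ^ p := by gcongr
    _ = η ^ 2 := by
        rw [← Real.rpow_add' hη (by norm_num), sub_add_cancel, Real.rpow_two]

lemma l2_restr_compl_le_of_inClass {N k : ℕ} {p η r : ℝ} {x : Fin N → ℝ} (hp : 0 < p)
    (hp2 : p ≤ 2) (hη : 0 ≤ η) (hx : inClass p η k r x) : l2 (restr (Sr r x)ᶜ x) ≤ η := by
  rw [l2, sum_sq_restr, ← Real.sqrt_sq hη]
  exact Real.sqrt_le_sqrt (sum_sq_le_of_sum_abs_rpow_le hp hp2 hη hx.2)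


lemma RIP.mul_l2_restr_le {m N K : ℕ} {A : Matrix (Fin m) (Fin N) ℝ} {δ : ℝ} (hRIP : RIP A K δ)
    (hA : ∀ z, l2 (A *ᵥ z) ≤ l2 z) {U : Finset (Fin N)} (hU : U.card ≤ K) (z : Fin N → ℝ) :
    (1 - δ) * l2 (restr U z) ≤ l2 (A *ᵥ z) + l2 (restr Uᶜ z) :=
  calc (1 - δ) * l2 (restr U z) ≤ l2 (A *ᵥ restr U z) :=
        (hRIP _ ((card_le_card (supp_restr_subset U z)).trans hU)).1
    _ ≤ l2 (A *ᵥ z) + l2 (A *ᵥ restr Uᶜ z) := by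
        rw [restr_eq_sub_restr_compl, Matrix.mulVec_sub]
        exact l2_sub_le _ _
    _ ≤ l2 (A *ᵥ z) + l2 (restr Uᶜ z) := by gcongr; exact hA _

lemma le_of_sq_add_mul_le {τ a b : ℝ} {n n' : ℕ} (hb : b ^ 2 < τ)
    (h : a ^ 2 + τ * n ≤ b ^ 2 + τ * n') : n ≤ n' := by
  have hτ : 0 < τ := (sq_nonneg b).trans_lt hb
  have : τ * n < τ * (n' + 1) := by nlinarith [sq_nonneg a]
  exact Nat.lt_add_one_iff.mp (by exact_mod_cast lt_of_mul_lt_mul_left this hτ.le)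

lemma div_lt_sub_of_lt_div_one_add {s r η β d : ℝ} (hd : 0 < d) (hβ : 0 < β)
    (h : s < (r - η / d) / (1 + 1 / (d * β))) : (s / β + η) / d < r - s := by
  rw [lt_div_iff₀ (by positivity)] at h
  rw [div_lt_iff₀ hd]
  have key : s * (1 + 1 / (d * β)) * d = s * d + s / β := by field_simp
  have key' : (r - η / d) * d = r * d - η := by field_simp
  nlinarith [mul_lt_mul_of_pos_right h hd]

theorem stmt12_general {m N : ℕ} (A : Matrix (Fin m) (Fin N) ℝ) (k : ℕ)
    (δ β p η r τ : ℝ)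
    (hAnorm : ∀ z : Fin N → ℝ, l2 (A.mulVec z) ≤ l2 z)
    (hRIP : RIP A (2 * k) δ) (hδ : δ < 1)
    (hβ : 0 < β)
    (hp : 1 ≤ p) (hp2 : p ≤ 2) (hη : 0 ≤ η)
    (x : Fin N → ℝ) (hx : inClass p η k r x)
    (hτ1 : η < Real.sqrt τ)
    (hτ2 : Real.sqrt τ < (r - η / (1 - δ)) / (1 + 1 / ((1 - δ) * β)))
    (xIHT : Fin N → ℝ)
    (hJ : l2 (A.mulVec xIHT - A.mulVec x) ^ 2 + τ * ((supp xIHT).card : ℝ) ≤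
      l2 (A.mulVec (restr (Sr r x) x) - A.mulVec x) ^ 2 +
        τ * ((supp (restr (Sr r x) x)).card : ℝ))
    (hres : l2 (A.mulVec xIHT - A.mulVec x) ≤ Real.sqrt τ / β) :
    supp xIHT = Sr r x ∧ ∀ i ∈ Sr r x, |x i - xIHT i| < r - Real.sqrt τ := by
  set S := Sr r x
  set T := supp xIHT
  have hδ' : 0 < 1 - δ := sub_pos.mpr hδ
  have htail : l2 (restr Sᶜ x) ≤ η := l2_restr_compl_le_of_inClass (by linarith) hp2 hη hx
  have hcard : T.card ≤ S.card := by
    have hresS : l2 (A *ᵥ restr S x - A *ᵥ x) ≤ η := by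
      rw [← Matrix.mulVec_sub, restr_eq_sub_restr_compl, sub_sub_cancel_left, Matrix.mulVec_neg,
        l2_neg]
      exact (hAnorm _).trans htail
    have hb : l2 (A *ᵥ restr S x - A *ᵥ x) ^ 2 < τ := by
      calc _ ≤ η ^ 2 := by gcongr; exact l2_nonneg _
        _ < Real.sqrt τ ^ 2 := by gcongr
        _ = τ := Real.sq_sqrt (Real.sqrt_pos.mp (hη.trans_lt hτ1)).le
    exact (le_of_sq_add_mul_le hb hJ).trans (card_le_card (supp_restr_subset _ _))
  have hclose : ∀ i ∈ S ∪ T, |x i - xIHT i| < r - Real.sqrt τ := by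
    have hU : (S ∪ T).card ≤ 2 * k := (card_union_le S T).trans (by linarith [hx.1])
    have hRIPbound := hRIP.mul_l2_restr_le hAnorm hU (x - xIHT)
    rw [restr_compl_sub_eq subset_union_left subset_union_right] at hRIPbound
    have hAerr : l2 (A *ᵥ (x - xIHT)) ≤ Real.sqrt τ / β := by
      rwa [Matrix.mulVec_sub, ← neg_sub, l2_neg]
    intro i hi
    calc |x i - xIHT i| = |restr (S ∪ T) (x - xIHT) i| := by simp [restr, hi]
      _ ≤ l2 (restr (S ∪ T) (x - xIHT)) := abs_le_l2 _ _
      _ ≤ (Real.sqrt τ / β + η) / (1 - δ) := by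
          rw [le_div_iff₀ hδ']
          linarith [l2_restr_le (S ∪ T)ᶜ (restr Sᶜ x)]
      _ < r - Real.sqrt τ := div_lt_sub_of_lt_div_one_add hδ' hβ hτ2
  have hST : S ⊆ T := fun i hi => by
    by_contra hiT
    have hzero : xIHT i = 0 := by simpa [T, supp] using hiT
    have hlt := hclose i (mem_union_left _ hi)
    have hgt : r < |x i| := (mem_filter.mp hi).2
    rw [hzero, sub_zero] at hlt
    linarith [Real.sqrt_nonneg τ]
  exact ⟨(eq_of_subset_of_card_le hST hcard).symm, fun i hi => hclose i (mem_union_left _ hi)⟩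

theorem stmt12 {m N : ℕ} (A : Matrix (Fin m) (Fin N) ℝ) (k : ℕ)
    (δ β p η r τ : ℝ)
    (hAnorm : ∀ z : Fin N → ℝ, l2 (A.mulVec z) ≤ l2 z)
    (hRIP : RIP A (2 * k) δ) (hδ : δ < 1)
    (hβ : 0 < β)
    (hβA : ∀ z : Fin m → ℝ, ∃ i : Fin N, β * l2 z ≤ |A.transpose.mulVec z i|)
    (hp : 1 ≤ p) (hp2 : p ≤ 2) (hη : 0 ≤ η)
    (x : Fin N → ℝ) (hx : inClass p η k r x)
    (hr : η * (1 + (1 / (1 - δ)) * (1 + 1 / β)) < r)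
    (hτ1 : η < Real.sqrt τ)
    (hτ2 : Real.sqrt τ < (r - η / (1 - δ)) / (1 + 1 / ((1 - δ) * β)))
    (xIHT : Fin N → ℝ)
    (hfix : xIHT =
      hardThr (Real.sqrt τ) (xIHT + A.transpose.mulVec (A.mulVec x - A.mulVec xIHT)))
    (hJ : l2 (A.mulVec xIHT - A.mulVec x) ^ 2 + τ * ((supp xIHT).card : ℝ) ≤
      l2 (A.mulVec (restr (Sr r x) x) - A.mulVec x) ^ 2 +
        τ * ((supp (restr (Sr r x) x)).card : ℝ))
    (hres : l2 (A.mulVec xIHT - A.mulVec x) ≤ Real.sqrt τ / β) :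
    supp xIHT = Sr r x ∧ ∀ i ∈ Sr r x, |x i - xIHT i| < r - Real.sqrt τ :=
  stmt12_general A k δ β p η r τ hAnorm hRIP hδ hβ hp hp2 hη x hx hτ1 hτ2 xIHT hJ hres
end
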